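/- arXiv:1911.00698 — 3 statements merged into one kernel-verified Lean document; each statement's English description precedes it below -/
import Mathlib

section
/- Let 0 < λₙ < λₙ₊₁ and set θ := (2/3)(λₙ + λₙ₊₁) − (1/3)√(λₙ₊₁² − λₙλₙ₊₁ + λₙ²). Then the common value ν := λₙ + λₙ₊₁ − 2θ satisfies ν² + λₙν − (λₙ−θ)² = 0 and ν² + λₙ₊₁ν − (λₙ₊₁−θ)² = 0, and moreover ν = (λₙ₊₁ − λₙ)² / (λₙ + λₙ₊₁ + 2√(λₙ₊₁² − λₙλₙ₊₁ + λₙ²)). -/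
/-! With `s = √(b² - ab + a²)` one has `θ = (2(a + b) - s)/3` and `ν = (2s - (a + b))/3`, so each
quadratic reduces to `(s² - (b² - ab + a²))/3 = 0`, and `ν (a + b + 2s) = (4s² - (a + b)²)/3 = (b - a)²`.
The denominator is positive because `4(b² - ab + a²) = (a + b)² + 3(b - a)² > (a + b)²`. -/

section CommonRoot

variable {a b s θ ν : ℝ} (hs : s ^ 2 = b ^ 2 - a * b + a ^ 2)
  (hθ : θ = (2/3) * (a + b) - (1/3) * s) (hν : ν = a + b - 2 * θ)
include hs hθ hν

theorem quadratic_eq_zero_left : ν ^ 2 + a * ν - (a - θ) ^ 2 = 0 := by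
  subst hθ hν
  linear_combination (1/3 : ℝ) * hs

theorem quadratic_eq_zero_right : ν ^ 2 + b * ν - (b - θ) ^ 2 = 0 := by
  subst hθ hν
  linear_combination (1/3 : ℝ) * hs

theorem mul_add_two_mul_eq_sub_sq : ν * (a + b + 2 * s) = (b - a) ^ 2 := by
  subst hθ hν
  linear_combination (4/3 : ℝ) * hs

end CommonRoot

theorem sq_sub_mul_add_sq_nonneg (a b : ℝ) : 0 ≤ b ^ 2 - a * b + a ^ 2 := by
  nlinarith [sq_nonneg (a - b), sq_nonneg (a + b)]

theorem add_lt_two_mul_sqrt {a b : ℝ} (hab : a ≠ b) :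
    -(a + b) < 2 * Real.sqrt (b ^ 2 - a * b + a ^ 2) := by
  have hsq : (a + b) ^ 2 < (2 * Real.sqrt (b ^ 2 - a * b + a ^ 2)) ^ 2 := by
    rw [mul_pow, Real.sq_sqrt (sq_sub_mul_add_sq_nonneg a b)]
    nlinarith [sq_pos_of_ne_zero (sub_ne_zero.mpr hab)]
  linarith [abs_lt_of_sq_lt_sq hsq (by positivity), neg_abs_le (a + b)]

theorem nu_common_value_general (a b : ℝ) (hab : a < b)
    (θ : ℝ) (hθ : θ = (2/3) * (a + b) - (1/3) * Real.sqrt (b^2 - a*b + a^2))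
    (ν : ℝ) (hν : ν = a + b - 2 * θ) :
    ν^2 + a * ν - (a - θ)^2 = 0 ∧
    ν^2 + b * ν - (b - θ)^2 = 0 ∧
    ν = (b - a)^2 / (a + b + 2 * Real.sqrt (b^2 - a*b + a^2)) := by
  have hs : Real.sqrt (b ^ 2 - a * b + a ^ 2) ^ 2 = b ^ 2 - a * b + a ^ 2 :=
    Real.sq_sqrt (sq_sub_mul_add_sq_nonneg a b)
  have hden : a + b + 2 * Real.sqrt (b ^ 2 - a * b + a ^ 2) ≠ 0 := by
    linarith [add_lt_two_mul_sqrt hab.ne]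
  refine ⟨quadratic_eq_zero_left hs hθ hν, quadratic_eq_zero_right hs hθ hν, ?_⟩
  rw [eq_div_iff hden]
  exact mul_add_two_mul_eq_sub_sq hs hθ hν

theorem nu_common_value (a b : ℝ) (ha : 0 < a) (hab : a < b)
    (θ : ℝ) (hθ : θ = (2/3) * (a + b) - (1/3) * Real.sqrt (b^2 - a*b + a^2))
    (ν : ℝ) (hν : ν = a + b - 2 * θ) :
    ν^2 + a * ν - (a - θ)^2 = 0 ∧
    ν^2 + b * ν - (b - θ)^2 = 0 ∧
    ν = (b - a)^2 / (a + b + 2 * Real.sqrt (b^2 - a*b + a^2)) :=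
  nu_common_value_general a b hab θ hθ ν hν
end

section
/- Let 0 < λₙ < λₙ₊₁ and θ := (2/3)(λₙ + λₙ₊₁) − (1/3)√(λₙ₊₁² − λₙλₙ₊₁ + λₙ²). Then μ_min(λₙ, θ) = μ_min(λₙ₊₁, θ), where μ_min(λ,θ) := ((√(4(λ−θ)² + λ²) − λ)/2)². Moreover this θ is the unique point in (λₙ, λₙ₊₁) where equality holds. -/
/-!
For fixed `λ`, `μ_min(λ, θ)` depends on `θ` only through `(λ - θ)²`, and increasingly so; hence it
is strictly decreasing for `θ ≤ λ` and strictly increasing for `θ ≥ λ`. On `[λₙ, λₙ₊₁]` the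
difference `μ_min(λₙ, ·) - μ_min(λₙ₊₁, ·)` is therefore strictly increasing and vanishes at most
once. At the given `θ` both square roots are explicit, `√(4(λₙ - θ)² + λₙ²) = 3λₙ + 2λₙ₊₁ - 4θ` and
symmetrically, so equality holds there, and `θ` lies in `(λₙ, λₙ₊₁)`.
-/

open Set

noncomputable section

def muMin (lam θ : ℝ) : ℝ := ((√(4 * (lam - θ) ^ 2 + lam ^ 2) - lam) / 2) ^ 2

def equalizingTheta (a b : ℝ) : ℝ := (2 / 3) * (a + b) - (1 / 3) * √(b ^ 2 - a * b + a ^ 2)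

end

theorem le_sqrt_four_mul_sq_add_sq (lam x : ℝ) : lam ≤ √(4 * x ^ 2 + lam ^ 2) :=
  (le_abs_self lam).trans (Real.abs_le_sqrt (by nlinarith))

theorem muMin_lt_muMin_of_sq_lt {lam x y : ℝ} (h : (lam - x) ^ 2 < (lam - y) ^ 2) :
    muMin lam x < muMin lam y := by
  have hroot : √(4 * (lam - x) ^ 2 + lam ^ 2) < √(4 * (lam - y) ^ 2 + lam ^ 2) :=
    Real.sqrt_lt_sqrt (by positivity) (by linarith)
  have hnonneg : 0 ≤ √(4 * (lam - x) ^ 2 + lam ^ 2) - lam :=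
    sub_nonneg.2 (le_sqrt_four_mul_sq_add_sq lam _)
  unfold muMin
  gcongr

theorem strictMonoOn_muMin (lam : ℝ) : StrictMonoOn (muMin lam) (Ici lam) :=
  fun x hx y _ hxy => muMin_lt_muMin_of_sq_lt (by nlinarith [mem_Ici.1 hx])

theorem strictAntiOn_muMin (lam : ℝ) : StrictAntiOn (muMin lam) (Iic lam) :=
  fun x _ y hy hxy => muMin_lt_muMin_of_sq_lt (by nlinarith [mem_Iic.1 hy])

theorem eq_of_muMin_eq_muMin {a b x y : ℝ} (hx : x ∈ Icc a b) (hy : y ∈ Icc a b)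
    (hxeq : muMin a x = muMin b x) (hyeq : muMin a y = muMin b y) : x = y := by
  have hmono : StrictMonoOn (fun θ => muMin a θ - muMin b θ) (Icc a b) :=
    fun u hu v hv huv =>
      sub_lt_sub (strictMonoOn_muMin a hu.1 hv.1 huv) (strictAntiOn_muMin b hu.2 hv.2 huv)
  exact hmono.injOn hx hy ((sub_eq_zero.2 hxeq).trans (sub_eq_zero.2 hyeq).symm)

theorem equalizingTheta_comm (a b : ℝ) : equalizingTheta b a = equalizingTheta a b := by
  unfold equalizingTheta
  rw [add_comm b a]
  ring_nf

theorem sq_sqrt_sq_sub_mul_add_sq (a b : ℝ) :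
    √(b ^ 2 - a * b + a ^ 2) ^ 2 = b ^ 2 - a * b + a ^ 2 :=
  Real.sq_sqrt (by nlinarith [sq_nonneg (a - b)])

theorem sqrt_four_mul_sq_add_sq_equalizingTheta (a b : ℝ) :
    √(4 * (a - equalizingTheta a b) ^ 2 + a ^ 2) = 3 * a + 2 * b - 4 * equalizingTheta a b := by
  have hr := sq_sqrt_sq_sub_mul_add_sq a b
  have hr0 := Real.sqrt_nonneg (b ^ 2 - a * b + a ^ 2)
  rw [Real.sqrt_eq_iff_eq_sq (by positivity)]
  · unfold equalizingTheta
    linear_combination (-4 / 3) * hr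
  · unfold equalizingTheta
    nlinarith

theorem muMin_eq_muMin_equalizingTheta (a b : ℝ) :
    muMin a (equalizingTheta a b) = muMin b (equalizingTheta a b) := by
  have hb := sqrt_four_mul_sq_add_sq_equalizingTheta b a
  rw [equalizingTheta_comm] at hb
  unfold muMin
  rw [sqrt_four_mul_sq_add_sq_equalizingTheta, hb]
  ring

theorem equalizingTheta_mem_Ioo {a b : ℝ} (ha : 0 < a) (hab : a < b) :
    equalizingTheta a b ∈ Ioo a b := by
  have hr := sq_sqrt_sq_sub_mul_add_sq a b
  have hr0 := Real.sqrt_nonneg (b ^ 2 - a * b + a ^ 2)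
  unfold equalizingTheta
  constructor <;> nlinarith [mul_pos ha (sub_pos.2 hab)]

theorem mu_min_equalizing_theta (a b : ℝ) (ha : 0 < a) (hab : a < b)
    (θ : ℝ) (hθ : θ = (2/3) * (a + b) - (1/3) * Real.sqrt (b^2 - a*b + a^2)) :
    ((Real.sqrt (4 * (a - θ)^2 + a^2) - a) / 2)^2 =
      ((Real.sqrt (4 * (b - θ)^2 + b^2) - b) / 2)^2 ∧
    ∀ θ' ∈ Set.Ioo a b,
      ((Real.sqrt (4 * (a - θ')^2 + a^2) - a) / 2)^2 =
        ((Real.sqrt (4 * (b - θ')^2 + b^2) - b) / 2)^2 → θ' = θ := by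
  change θ = equalizingTheta a b at hθ
  subst hθ
  refine ⟨muMin_eq_muMin_equalizingTheta a b, fun θ' hθ' heq => ?_⟩
  exact eq_of_muMin_eq_muMin (Ioo_subset_Icc_self hθ')
    (Ioo_subset_Icc_self (equalizingTheta_mem_Ioo ha hab)) heq (muMin_eq_muMin_equalizingTheta a b)
end

section
/- Let 0 < λₙ < λₙ₊₁, K := (√λₙ₊₁ − √λₙ)², ε ∈ ℝ, and let f(x) be the determinant of the 4×4 matrix [[λₙ − x, λₙ, 0, 0],[K, λₙ − x, ε, 0],[0, 0, λₙ₊₁ − x, λₙ₊₁],[ε, 0, K, λₙ₊₁ − x]]. Then f(y + √(λₙλₙ₊₁)) = −ε²λₙλₙ₊₁ − 4√(λₙλₙ₊₁)(√λₙ₊₁ − √λₙ)² y² − 2(√λₙ₊₁ − √λₙ)² y³ + y⁴ for all y ∈ ℝ. -/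
/-!
Expanding along the first row, the only permutation that uses both coupling entries `ε` is the
4-cycle `0 → 1 → 2 → 3 → 0`, so the determinant is the product of the determinants of the two
diagonal 2×2 blocks minus `ε² a b`. Writing `a = u²`, `b = v²`, `K = (v - u)²` and shifting
`x = u v + y`, the two blocks become `y (y + 2u(v - u))` and `y (y - 2v(v - u))`.
-/

variable {R : Type*} [CommRing R]

def coupledBlock (a b K ε x : R) : Matrix (Fin 4) (Fin 4) R :=
  !![a - x, a, 0, 0;
     K, a - x, ε, 0;
     0, 0, b - x, b;
     ε, 0, K, b - x]

theorem det_coupledBlock (a b K ε x : R) :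
    (coupledBlock a b K ε x).det = ((a - x) ^ 2 - a * K) * ((b - x) ^ 2 - b * K) - ε ^ 2 * (a * b) := by
  simp [coupledBlock, Matrix.det_succ_row_zero, Fin.sum_univ_succ, Fin.succAbove]
  ring

theorem det_coupledBlock_sq_shift (u v ε y : R) :
    (coupledBlock (u ^ 2) (v ^ 2) ((v - u) ^ 2) ε (y + u * v)).det =
      -ε ^ 2 * (u ^ 2 * v ^ 2) - 4 * (u * v) * (v - u) ^ 2 * y ^ 2 -
        2 * (v - u) ^ 2 * y ^ 3 + y ^ 4 := by
  rw [det_coupledBlock]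
  ring

theorem determinant_identity_4x4 (a b ε : ℝ) (ha : 0 < a) (hab : a < b)
    (K : ℝ) (hK : K = (Real.sqrt b - Real.sqrt a)^2) :
    ∀ y : ℝ,
      (!![a - (y + Real.sqrt (a * b)), a, 0, 0;
          K, a - (y + Real.sqrt (a * b)), ε, 0;
          0, 0, b - (y + Real.sqrt (a * b)), b;
          ε, 0, K, b - (y + Real.sqrt (a * b))] : Matrix (Fin 4) (Fin 4) ℝ).det =
        -ε^2 * (a * b) - 4 * Real.sqrt (a * b) * (Real.sqrt b - Real.sqrt a)^2 * y^2 -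
          2 * (Real.sqrt b - Real.sqrt a)^2 * y^3 + y^4 := by
  intro y
  subst hK
  have h := det_coupledBlock_sq_shift (Real.sqrt a) (Real.sqrt b) ε y
  rw [Real.sq_sqrt ha.le, Real.sq_sqrt (ha.trans hab).le, ← Real.sqrt_mul ha.le] at h
  exact h
end
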